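/- Let W be a type, S a subset of W, and f, g : W → [0,1]. Then ⨆_{w ∈ S} (f w ⇒ g w) ≤ ((⨅_{w ∈ S} f w) ⇒ (⨆_{w ∈ S} g w)). (This is soundness of the Fischer Servi axiom (FS1): ◇(φ → ψ) → (□φ → ◇ψ) at any world of any crisp Gödel-Kripke model.) -/
import Mathlib


open unitInterval

instance : Fact ((0:ℝ) ≤ 1) := ⟨zero_le_one⟩

noncomputable instance : CompleteLattice unitInterval := Set.Icc.completeLattice

/-- Gödel implication on the unit interval. -/
noncomputable def gimp (a b : unitInterval) : unitInterval := if a ≤ b then 1 else b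

infixr:60 " ⇒ " => gimp

/-- Gödel negation on the unit interval. -/
noncomputable def gneg (a : unitInterval) : unitInterval := a ⇒ 0

theorem soundness_FS1 {W : Type*} (S : Set W) (f g : W → unitInterval) :
    (⨆ w ∈ S, (f w ⇒ g w)) ≤ ((⨅ w ∈ S, f w) ⇒ (⨆ w ∈ S, g w)) := by
  apply iSup₂_le
  intro w hw
  simp only [gimp]
  split_ifs with h1 h2 h2
  · exact le_refl _
  · exact absurd (le_trans (le_trans (biInf_le f hw) h1) (le_biSup g hw)) h2
  · exact le_top
  · exact le_biSup g hw
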